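/- Let p₊ = s₊(r)ζ and p₋ = -s²₋(r)ζ for a unit vector ζ ∈ ℝⁿ, where σ(s₊(r)) = r and σ(s²₋(r)) = -r with r > 0 and A(p) = σ(|p|)p/|p| for p ≠ 0. Then A(p₊) = A(p₋) = rζ, and in particular (A(p₊) - A(p₋))·(p₊ - p₋) = 0 while p₊ - p₋ = (s₊(r) + s²₋(r))ζ ≠ 0. -/
import Mathlib


open scoped RealInnerProductSpace

/-- With `p₊ = s₊(r) ζ`, `p₋ = -s²₋(r) ζ` for a unit vector `ζ`, where
`σ(s₊(r)) = r`, `σ(s²₋(r)) = -r`, `r > 0`, and `A p = σ(|p|) |p|⁻¹ • p`, one has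
`A(p₊) = A(p₋) = r ζ`, hence `(A(p₊) - A(p₋))·(p₊ - p₋) = 0`, while
`p₊ - p₋ = (s₊(r) + s²₋(r)) ζ ≠ 0`. -/
theorem rank_one_connection_values {n : ℕ} (σ : ℝ → ℝ)
    (ζ : EuclideanSpace ℝ (Fin n)) (hζ : ‖ζ‖ = 1)
    (sp sm r : ℝ) (hsp : 0 < sp) (hsm : 0 < sm) (hr : 0 < r)
    (hσp : σ sp = r) (hσm : σ sm = -r)
    (A : EuclideanSpace ℝ (Fin n) → EuclideanSpace ℝ (Fin n))
    (hA : ∀ p : EuclideanSpace ℝ (Fin n), p ≠ 0 → A p = σ ‖p‖ • (‖p‖⁻¹ • p)) :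
    A (sp • ζ) = r • ζ ∧ A ((-sm) • ζ) = r • ζ ∧
    ⟪A (sp • ζ) - A ((-sm) • ζ), sp • ζ - (-sm) • ζ⟫ = 0 ∧
    sp • ζ - (-sm) • ζ = (sp + sm) • ζ ∧
    sp • ζ - (-sm) • ζ ≠ 0 := by
  have hζ0 : ζ ≠ 0 := by
    intro h; rw [h, norm_zero] at hζ; norm_num at hζ
  have hp : (sp • ζ : EuclideanSpace ℝ (Fin n)) ≠ 0 := smul_ne_zero hsp.ne' hζ0
  have hm : ((-sm) • ζ : EuclideanSpace ℝ (Fin n)) ≠ 0 :=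
    smul_ne_zero (by simpa using hsm.ne') hζ0
  have hnp : ‖(sp • ζ : EuclideanSpace ℝ (Fin n))‖ = sp := by
    rw [norm_smul, hζ]; simp [abs_of_pos hsp]
  have hnm : ‖((-sm) • ζ : EuclideanSpace ℝ (Fin n))‖ = sm := by
    rw [norm_smul, hζ]; simp [abs_of_pos hsm]
  have h1 : A (sp • ζ) = r • ζ := by
    rw [hA _ hp, hnp, hσp, smul_smul, smul_smul]
    congr 1
    field_simp
  have h2 : A ((-sm) • ζ) = r • ζ := by
    rw [hA _ hm, hnm, hσm, smul_smul, smul_smul]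
    congr 1
    field_simp
  refine ⟨h1, h2, ?_, ?_, ?_⟩
  · rw [h1, h2, sub_self, inner_zero_left]
  · module
  · rw [h1, h2] at *
    have : sp • ζ - (-sm) • ζ = (sp + sm) • ζ := by module
    rw [this]
    exact smul_ne_zero (by positivity) hζ0
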